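/- arXiv:2206.01155 — 6 statements merged into one kernel-verified Lean document; each statement's English description precedes it below -/
import Mathlib

section
/- Let C be a Strong Cauchy structure on X satisfying the generalized Fréchet–Wilson condition: for all sequences {x_n}, {z_n} ∈ s(X) and {y_n} ∈ C, if both interleaved sequences {x_n}⊓{y_n} and {y_n}⊓{z_n} belong to C, then {x_n}⊓{z_n} ∈ C. Then for every {x_n} ∈ C, the set CLim{x_n} = {x ∈ X : ⟨x⟩⊓{x_n} ∈ C} contains at most one point; i.e., (X, CLim) is a C-Fréchet space. -/
/-- The interleaved (alternating) sequence (x₀, y₀, x₁, y₁, ...). -/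
def altSeq {X : Type*} (x y : ℕ → X) : ℕ → X :=
  fun n => if n % 2 = 0 then x (n / 2) else y (n / 2)

/-!
Shifting `⟨b⟩ ⊓ {x_n}` by one place gives `{x_n} ⊓ ⟨b⟩`, so the Fréchet–Wilson condition, applied
with `{x_n}` in the middle, puts `⟨a⟩ ⊓ ⟨b⟩ = (a, b, a, b, …)` into `C`. This sequence is periodic
with period `2`, so the strong Cauchy axiom forces its first and second terms to agree: `a = b`.
-/

section altSeq

variable {X : Type*}

theorem altSeq_const_left_shift (b : X) (x : ℕ → X) :
    (fun n => altSeq (fun _ => b) x (n + 1)) = altSeq x (fun _ => b) := by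
  funext n
  simp only [altSeq]
  rcases Nat.even_or_odd' n with ⟨m, rfl | rfl⟩
  · rw [if_neg (by omega), if_pos (by omega)]
    congr 1
    omega
  · rw [if_pos (by omega), if_neg (by omega)]

theorem altSeq_const_add_two (a b : X) (n : ℕ) :
    altSeq (fun _ => a) (fun _ => b) (n + 2) = altSeq (fun _ => a) (fun _ => b) n := by
  simp only [altSeq, Nat.add_mod_right]

end altSeq

theorem stmt_3_general {X : Type*} (C : Set (ℕ → X))
    (hshift : ∀ x ∈ C, (fun n => x (n + 1)) ∈ C)
    (hper : ∀ n : ℕ, 0 < n → ∀ p : ℕ → X, (∀ k, p (k + n) = p k) → p ∈ C →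
      p 0 = p (n - 1))
    (hFW : ∀ x z y : ℕ → X, y ∈ C → altSeq x y ∈ C → altSeq y z ∈ C → altSeq x z ∈ C)
    (x : ℕ → X) (hx : x ∈ C) (a b : X)
    (ha : altSeq (fun _ => a) x ∈ C) (hb : altSeq (fun _ => b) x ∈ C) :
    a = b := by
  have hxb : altSeq x (fun _ => b) ∈ C := altSeq_const_left_shift b x ▸ hshift _ hb
  have hab : altSeq (fun _ => a) (fun _ => b) ∈ C := hFW _ _ x hx ha hxb
  exact hper 2 two_pos _ (altSeq_const_add_two a b) hab

/-- A Strong Cauchy structure satisfying the generalized Fréchet–Wilson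
condition yields a C-Fréchet space: `CLim {x_n}` has at most one point for `{x_n} ∈ C`. -/
theorem stmt_3 {X : Type*} (C : Set (ℕ → X))
    (hshift : ∀ x ∈ C, (fun n => x (n + 1)) ∈ C)
    (hconst : ∀ a : X, (fun _ => a) ∈ C)
    (hper : ∀ n : ℕ, 0 < n → ∀ p : ℕ → X, (∀ k, p (k + n) = p k) → p ∈ C →
      p 0 = p (n - 1))
    (hFW : ∀ x z y : ℕ → X, y ∈ C → altSeq x y ∈ C → altSeq y z ∈ C → altSeq x z ∈ C)
    (x : ℕ → X) (hx : x ∈ C) (a b : X)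
    (ha : altSeq (fun _ => a) x ∈ C) (hb : altSeq (fun _ => b) x ∈ C) :
    a = b :=
  stmt_3_general C hshift hper hFW x hx a b ha hb
end

section
/- Let (Y, Lim_Y) be a Lim-space such that every constant sequence ⟨α⟩ is convergent and Lim_Y⟨α⟩ = Lim_Y⟨β⟩ implies α = β. Let d: X² → Y be a Y-valued distance, i.e., d(x,y) = d(y,x) = d(x,x) = d(y,y) implies x = y. Then the family C_d, consisting of all sequences {x_n} in X such that for all index sequences {m_k}, {n_k} tending to infinity the sequence {d(x_{m_k}, x_{n_k})} converges in Y with limit set independent of the choice of {m_k}, {n_k}, is a Strong Cauchy structure; in particular, if a periodic sequence ⟨z₁,...,z_n⟩ belongs to C_d then z₁ = z_n. -/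
/-!
Evaluating along the index sequences `r + k n` and `s + k n`, which tend to infinity, a periodic
sequence `p` of period `n` in `C_d` turns `d(p_{m_k}, p_{n_k})` into the constant sequence
`⟨d(p_r, p_s)⟩`. So all these constant sequences share one limit set, and injectivity of `Lim_Y`
on constants makes `d(p_r, p_s)` independent of `r, s`; the distance axiom then forces `p_r = p_s`.
-/

open Filter

/-- The Cauchy structure defined by a `Y`-valued distance `d`: sequences such that
`d(x_{m_k}, x_{n_k})` converges with limit set independent of the index sequences. -/
def CdStruct {X Y : Type*} (LimY : (ℕ → Y) → Set Y) (d : X → X → Y) (x : ℕ → X) : Prop :=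
  ∃ L : Set Y, L.Nonempty ∧ ∀ m n : ℕ → ℕ, Tendsto m atTop atTop → Tendsto n atTop atTop →
    LimY (fun k => d (x (m k)) (x (n k))) = L

namespace CdStruct

variable {X Y : Type*} {LimY : (ℕ → Y) → Set Y} {d : X → X → Y}

theorem shift {x : ℕ → X} (hx : CdStruct LimY d x) : CdStruct LimY d (fun n => x (n + 1)) := by
  obtain ⟨L, hL, hlim⟩ := hx
  exact ⟨L, hL, fun m n hm hn =>
    hlim (m · + 1) (n · + 1) ((tendsto_add_atTop_nat 1).comp hm)
      ((tendsto_add_atTop_nat 1).comp hn)⟩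

theorem const (a : X) (ha : (LimY fun _ => d a a).Nonempty) : CdStruct LimY d (fun _ => a) :=
  ⟨_, ha, fun _ _ _ _ => rfl⟩

theorem limY_const_dist_eq_of_periodic {p : ℕ → X} {n : ℕ} (hp : CdStruct LimY d p)
    (hper : Function.Periodic p n) (hn : 0 < n) (r s r' s' : ℕ) :
    LimY (fun _ => d (p r) (p s)) = LimY (fun _ => d (p r') (p s')) := by
  obtain ⟨L, -, hlim⟩ := hp
  have hmul : ∀ r : ℕ, Tendsto (fun k => r + k * n) atTop atTop := fun _ =>
    tendsto_atTop_mono (fun _ => le_add_self) (tendsto_id.atTop_mul_const' hn)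
  have hsampled : ∀ k r, p (r + k * n) = p r := fun k => hper.nat_mul k
  have hsample : ∀ r s : ℕ, LimY (fun _ => d (p r) (p s)) = L := fun r s => by
    simpa only [hsampled] using hlim _ _ (hmul r) (hmul s)
  rw [hsample, hsample]

theorem eq_of_periodic
    (hinjY : ∀ α β : Y, LimY (fun _ => α) = LimY (fun _ => β) → α = β)
    (hd : ∀ x y : X, d x y = d y x → d y x = d x x → d x x = d y y → x = y)
    {p : ℕ → X} {n : ℕ} (hp : CdStruct LimY d p) (hper : Function.Periodic p n) (hn : 0 < n)
    (r s : ℕ) : p r = p s :=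
  have hdist : ∀ r s r' s', d (p r) (p s) = d (p r') (p s') := fun r s r' s' =>
    hinjY _ _ (hp.limY_const_dist_eq_of_periodic hper hn r s r' s')
  hd _ _ (hdist ..) (hdist ..) (hdist ..)

end CdStruct

theorem stmt_5_general {X Y : Type*} (LimY : (ℕ → Y) → Set Y)
    (hconstY : ∀ α : Y, (LimY (fun _ => α)).Nonempty)
    (hinjY : ∀ α β : Y, LimY (fun _ => α) = LimY (fun _ => β) → α = β)
    (d : X → X → Y)
    (hd : ∀ x y : X, d x y = d y x → d y x = d x x → d x x = d y y → x = y) :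
    (∀ x : ℕ → X, CdStruct LimY d x → CdStruct LimY d (fun n => x (n + 1))) ∧
    (∀ a : X, CdStruct LimY d (fun _ => a)) ∧
    (∀ n : ℕ, 0 < n → ∀ p : ℕ → X, (∀ k, p (k + n) = p k) → CdStruct LimY d p →
      p 0 = p (n - 1)) :=
  ⟨fun _ hx => hx.shift, fun a => .const a (hconstY _),
    fun _ hn _ hper hp => hp.eq_of_periodic hinjY hd hper hn 0 _⟩

/-- If constant sequences in `Y` converge and `Lim_Y` is injective on
constant sequences, then `C_d` is a Strong Cauchy structure. -/
theorem stmt_5 {X Y : Type*} (LimY : (ℕ → Y) → Set Y)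
    (hshiftY : ∀ y : ℕ → Y, LimY y = LimY (fun n => y (n + 1)))
    (hconstY : ∀ α : Y, (LimY (fun _ => α)).Nonempty)
    (hinjY : ∀ α β : Y, LimY (fun _ => α) = LimY (fun _ => β) → α = β)
    (d : X → X → Y)
    (hd : ∀ x y : X, d x y = d y x → d y x = d x x → d x x = d y y → x = y) :
    (∀ x : ℕ → X, CdStruct LimY d x → CdStruct LimY d (fun n => x (n + 1))) ∧
    (∀ a : X, CdStruct LimY d (fun _ => a)) ∧
    (∀ n : ℕ, 0 < n → ∀ p : ℕ → X, (∀ k, p (k + n) = p k) → CdStruct LimY d p →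
      p 0 = p (n - 1)) :=
  stmt_5_general LimY hconstY hinjY d hd
end

section
/- Let (X, Lim) be a Lim-space, C a Cauchy structure on X, and suppose (X, Lim) is C-complete (every sequence in C with pairwise distinct elements is convergent, i.e., has nonempty Lim). Let f: X → X be weakly orbital continuous (for every orbit sequence {x_n} = O(f, x₀) that is convergent, Lim{f(x_n)} = f(Lim{x_n})) and locally orbital contractive at some x₀ ∈ X (meaning the orbit O(f, x₀) either lies in C and has pairwise distinct elements, or has a repeated element). Then f has a nonempty fixed set, i.e., there exists a nonempty A ⊆ X with f(A) = A. -/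
/-! A convergent orbit is carried by `f` onto its own shift, whose limit set is the same; so its
limit set is fixed. An orbit that repeats a point runs into a periodic cycle, which is fixed too. -/

open Function Set

theorem Function.IsPeriodicPt.image_range_iterate {α : Type*} {f : α → α} {y : α} {p : ℕ}
    (hp : 0 < p) (hy : IsPeriodicPt f p y) :
    f '' range (fun k => f^[k] y) = range (fun k => f^[k] y) := by
  rw [← range_comp]
  refine Subset.antisymm ?_ ?_
  · rintro _ ⟨k, rfl⟩
    exact ⟨k + 1, iterate_succ_apply' f k y⟩
  · rintro _ ⟨k, rfl⟩
    refine ⟨k + p - 1, ?_⟩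
    rw [comp_apply, ← iterate_succ_apply' f, Nat.succ_eq_add_one, Nat.sub_add_cancel (by omega),
      iterate_add_apply, hy.eq]

theorem Function.exists_isPeriodicPt_iterate_of_not_injective {α : Type*} {f : α → α} {x : α}
    (h : ¬ Injective (fun n => f^[n] x)) : ∃ m p, 0 < p ∧ IsPeriodicPt f p (f^[m] x) := by
  obtain ⟨m, n, hmn, heq⟩ : ∃ m n, m < n ∧ f^[m] x = f^[n] x := by
    simp only [Injective, not_forall] at h
    obtain ⟨a, b, hab, hne⟩ := h
    rcases lt_or_gt_of_ne hne with hlt | hlt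
    · exact ⟨a, b, hlt, hab⟩
    · exact ⟨b, a, hlt, hab.symm⟩
  refine ⟨m, n - m, by omega, ?_⟩
  rw [IsPeriodicPt, IsFixedPt, ← iterate_add_apply, Nat.sub_add_cancel hmn.le, heq]

theorem image_lim_orbit_eq {X : Type*} (Lim : (ℕ → X) → Set X) {f : X → X} {x : X}
    (hshift : Lim (fun n => f^[n] x) = Lim (fun n => f^[n + 1] x))
    (hcont : Lim (fun n => f (f^[n] x)) = f '' Lim (fun n => f^[n] x)) :
    f '' Lim (fun n => f^[n] x) = Lim (fun n => f^[n] x) := by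
  simp only [← iterate_succ_apply' f] at hcont
  rw [← hcont, hshift]

theorem stmt_6_general {X : Type*} (Lim : (ℕ → X) → Set X)
    (hLim : ∀ x : ℕ → X, Lim x = Lim (fun n => x (n + 1)))
    (C : Set (ℕ → X))
    (hcomplete : ∀ x ∈ C, Function.Injective x → (Lim x).Nonempty)
    (f : X → X)
    (hcont : ∀ x0 : X, (Lim (fun n => f^[n] x0)).Nonempty →
      Lim (fun n => f (f^[n] x0)) = f '' Lim (fun n => f^[n] x0))
    (x0 : X)
    (hcontr : ((fun n => f^[n] x0) ∈ C ∧ Function.Injective (fun n => f^[n] x0)) ∨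
      ¬ Function.Injective (fun n => f^[n] x0)) :
    ∃ A : Set X, A.Nonempty ∧ f '' A = A := by
  rcases hcontr with ⟨hmem, hinj⟩ | hninj
  · have hne : (Lim (fun n => f^[n] x0)).Nonempty := hcomplete _ hmem hinj
    exact ⟨_, hne, image_lim_orbit_eq Lim (hLim _) (hcont x0 hne)⟩
  · obtain ⟨m, p, hp, hper⟩ := exists_isPeriodicPt_iterate_of_not_injective hninj
    exact ⟨_, range_nonempty _, hper.image_range_iterate hp⟩

/-- In a C-complete Lim-space, a weakly orbital continuous mapping that is
locally orbital contractive at some point has a nonempty fixed set. -/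
theorem stmt_6 {X : Type*} (Lim : (ℕ → X) → Set X)
    (hLim : ∀ x : ℕ → X, Lim x = Lim (fun n => x (n + 1)))
    (C : Set (ℕ → X))
    (hC : ∀ x ∈ C, (fun n => x (n + 1)) ∈ C)
    (hcomplete : ∀ x ∈ C, Function.Injective x → (Lim x).Nonempty)
    (f : X → X)
    (hcont : ∀ x0 : X, (Lim (fun n => f^[n] x0)).Nonempty →
      Lim (fun n => f (f^[n] x0)) = f '' Lim (fun n => f^[n] x0))
    (x0 : X)
    (hcontr : ((fun n => f^[n] x0) ∈ C ∧ Function.Injective (fun n => f^[n] x0)) ∨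
      ¬ Function.Injective (fun n => f^[n] x0)) :
    ∃ A : Set X, A.Nonempty ∧ f '' A = A :=
  stmt_6_general Lim hLim C hcomplete f hcont x0 hcontr
end

section
/- Let (X, Lim) be a C-complete Lim-space that is moreover a C-Fréchet space (Lim of every convergent sequence in C is a singleton), where C is a Strong Cauchy structure. Let f: X → X be weakly orbital continuous and suppose the orbit O(f, x₀) belongs to C for some x₀. Then f has a fixed point. -/
/-!
If the orbit of `x0` is injective, `C`-completeness and the Fréchet property give
`Lim (f^[n] x0) = {b}`; since `Lim` is shift invariant, weak orbital continuity turns this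
into `{b} = {f b}`. Otherwise the orbit is eventually `n`-periodic, its periodic tail lies
in `C`, and the Strong Cauchy condition `p 0 = p (n - 1)` says that the last point of a
period is mapped by `f` to itself.
-/

open Function

section
variable {X : Type*}

lemma add_shift_mem_of_shift_mem {C : Set (ℕ → X)}
    (hshift : ∀ x ∈ C, (fun n => x (n + 1)) ∈ C) (i : ℕ) {x : ℕ → X} (hx : x ∈ C) :
    (fun n => x (i + n)) ∈ C := by
  induction i generalizing x with
  | zero => simpa using hx
  | succ k ih => simpa [Nat.add_right_comm _ 1] using ih (hshift x hx)

lemma isFixedPt_of_lim_orbit_eq_singleton (Lim : (ℕ → X) → Set X)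
    (hLim : ∀ x : ℕ → X, Lim x = Lim (fun n => x (n + 1))) {f : X → X} {x b : X}
    (hcont : Lim (fun n => f (f^[n] x)) = f '' Lim (fun n => f^[n] x))
    (hb : Lim (fun n => f^[n] x) = {b}) :
    IsFixedPt f b := by
  have himage : (fun n => f (f^[n] x)) = fun n => f^[n + 1] x := by
    funext n
    exact (iterate_succ_apply' f n x).symm
  have hshiftLim : Lim (fun n => f^[n + 1] x) = Lim (fun n => f^[n] x) :=
    (hLim fun n => f^[n] x).symm
  rw [himage, hshiftLim, hb, Set.image_singleton] at hcont
  exact (Set.singleton_eq_singleton_iff.mp hcont).symm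

lemma exists_iterate_add_eq_of_not_injective {f : X → X} {x : X}
    (h : ¬ Injective fun n => f^[n] x) :
    ∃ i n : ℕ, 0 < n ∧ f^[i + n] x = f^[i] x := by
  obtain ⟨i, j, hij, hne⟩ := not_injective_iff.mp h
  rcases Nat.lt_or_gt_of_ne hne with hlt | hlt
  · exact ⟨i, j - i, by omega, by rw [Nat.add_sub_cancel' hlt.le]; exact hij.symm⟩
  · exact ⟨j, i - j, by omega, by rw [Nat.add_sub_cancel' hlt.le]; exact hij⟩

lemma isFixedPt_of_iterate_add_eq {C : Set (ℕ → X)}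
    (hper : ∀ n : ℕ, 0 < n → ∀ p : ℕ → X, (∀ m, p (m + n) = p m) → p ∈ C →
      p 0 = p (n - 1))
    {f : X → X} {x : X} {i n : ℕ} (hn : 0 < n) (hcycle : f^[i + n] x = f^[i] x)
    (horb : (fun m => f^[i + m] x) ∈ C) :
    IsFixedPt f (f^[i + (n - 1)] x) := by
  have hperiodic : ∀ m, f^[i + (m + n)] x = f^[i + m] x := fun m => by
    rw [show i + (m + n) = m + (i + n) by omega, iterate_add_apply, hcycle,
      ← iterate_add_apply, Nat.add_comm m]
  have hlast := hper n hn _ hperiodic horb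
  rw [IsFixedPt, ← iterate_succ_apply' f, Nat.succ_eq_add_one, Nat.add_assoc,
    Nat.sub_add_cancel hn, hcycle]
  simpa using hlast

end

theorem stmt_10_general {X : Type*} (Lim : (ℕ → X) → Set X)
    (hLim : ∀ x : ℕ → X, Lim x = Lim (fun n => x (n + 1)))
    (C : Set (ℕ → X))
    (hshift : ∀ x ∈ C, (fun n => x (n + 1)) ∈ C)
    (hper : ∀ n : ℕ, 0 < n → ∀ p : ℕ → X, (∀ m, p (m + n) = p m) → p ∈ C →
      p 0 = p (n - 1))
    (hcomplete : ∀ x ∈ C, Function.Injective x → (Lim x).Nonempty)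
    (hfrechet : ∀ x ∈ C, (Lim x).Nonempty → ∃ a : X, Lim x = {a})
    (f : X → X)
    (hcont : ∀ x0 : X, (Lim (fun n => f^[n] x0)).Nonempty →
      Lim (fun n => f (f^[n] x0)) = f '' Lim (fun n => f^[n] x0))
    (x0 : X) (horb : (fun n => f^[n] x0) ∈ C) :
    ∃ x : X, f x = x := by
  by_cases hinj : Injective fun n => f^[n] x0
  · have hconv := hcomplete _ horb hinj
    obtain ⟨b, hb⟩ := hfrechet _ horb hconv
    exact ⟨b, isFixedPt_of_lim_orbit_eq_singleton Lim hLim (hcont x0 hconv) hb⟩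
  · obtain ⟨i, n, hn, hcycle⟩ := exists_iterate_add_eq_of_not_injective hinj
    exact ⟨_, isFixedPt_of_iterate_add_eq hper hn hcycle
      (add_shift_mem_of_shift_mem hshift i horb)⟩

/-- In a C-complete C-Fréchet Lim-space with `C` a Strong Cauchy
structure, a weakly orbital continuous map whose orbit at some point lies in `C`
has a fixed point. -/
theorem stmt_10 {X : Type*} (Lim : (ℕ → X) → Set X)
    (hLim : ∀ x : ℕ → X, Lim x = Lim (fun n => x (n + 1)))
    (C : Set (ℕ → X))
    (hshift : ∀ x ∈ C, (fun n => x (n + 1)) ∈ C)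
    (hconst : ∀ a : X, (fun _ => a) ∈ C)
    (hper : ∀ n : ℕ, 0 < n → ∀ p : ℕ → X, (∀ m, p (m + n) = p m) → p ∈ C →
      p 0 = p (n - 1))
    (hcomplete : ∀ x ∈ C, Function.Injective x → (Lim x).Nonempty)
    (hfrechet : ∀ x ∈ C, (Lim x).Nonempty → ∃ a : X, Lim x = {a})
    (f : X → X)
    (hcont : ∀ x0 : X, (Lim (fun n => f^[n] x0)).Nonempty →
      Lim (fun n => f (f^[n] x0)) = f '' Lim (fun n => f^[n] x0))
    (x0 : X) (horb : (fun n => f^[n] x0) ∈ C) :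
    ∃ x : X, f x = x :=
  stmt_10_general Lim hLim C hshift hper hcomplete hfrechet f hcont x0 horb
end

section
/- (Caristi-type boundedness of orbit.) Let Y be a partially ordered set, ψ: ⋃_n Xⁿ → Y satisfy ψ(x₂,...,x_n) ≤ ψ(x₁,...,x_n), and suppose there is ψ̄: (⋃_n Xⁿ) × Y → Y with: ψ(x₁,...,x_n) ≤ ψ̄(x₁,...,x_n, y) for all y; ψ̄(x₁,...,x_n, y) ≤ ψ̄(x₁,...,x_{n-1}, ψ̄(x_n, y)); and y ≤ z implies ψ̄(x₁,...,x_n, y) ≤ ψ̄(x₁,...,x_n, z). If f: X → X and φ: X → Y satisfy ψ̄(x, φ(f(x))) ≤ φ(x) for all x in the orbit O(f, x₀), then setting x_n = fⁿ(x₀), for every n ≥ 1 one has ψ̄(x₀, x₁, ..., x_{n-1}, φ(x_n)) ≤ φ(x₀); consequently ψ(x₀, x₁, ..., x_n) ≤ φ(x₀) for all n, i.e., the sequence {ψ(x₀,...,x_n)} is bounded above by φ(x₀). -/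
/-!
Composing the one-step Caristi inequalities `ψ̄(xᵢ, φ(xᵢ₊₁)) ≤ φ(xᵢ)` along the orbit, using that
`ψ̄` splits off its last argument and is monotone in the value slot, telescopes to
`ψ̄(x₀, …, xₙ₋₁, φ(xₙ)) ≤ φ(x₀)`; since `ψ̄(l, y)` majorizes `ψ(l)`, the partial values `ψ(x₀, …, xₙ)`
are bounded by `φ(x₀)`.
-/

section Telescope

variable {X Y : Type*} [Preorder Y] (ψb : List X → Y → Y)

theorem ψb_map_range_le_of_step
    (hcompose : ∀ (l : List X) (x : X) (y : Y), ψb (l ++ [x]) y ≤ ψb l (ψb [x] y))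
    (hmono : ∀ l : List X, Monotone (ψb l))
    (x : ℕ → X) (v : ℕ → Y) (hstep : ∀ i, ψb [x i] (v (i + 1)) ≤ v i) :
    ∀ n, 1 ≤ n → ψb ((List.range n).map x) (v n) ≤ v 0 := by
  intro n hn
  induction n, hn using Nat.le_induction with
  | base => simpa using hstep 0
  | succ m _ ih =>
    rw [List.range_succ, List.map_append, List.map_singleton]
    calc ψb ((List.range m).map x ++ [x m]) (v (m + 1))
        ≤ ψb ((List.range m).map x) (ψb [x m] (v (m + 1))) := hcompose _ _ _
      _ ≤ ψb ((List.range m).map x) (v m) := hmono _ (hstep m)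
      _ ≤ v 0 := ih

end Telescope

theorem stmt_13_general {X Y : Type*} [PartialOrder Y]
    (ψ : List X → Y) (ψb : List X → Y → Y)
    (hmaj : ∀ (l : List X) (y : Y), ψ l ≤ ψb l y)
    (hcompose : ∀ (l : List X) (x : X) (y : Y), ψb (l ++ [x]) y ≤ ψb l (ψb [x] y))
    (hmono : ∀ l : List X, Monotone (ψb l))
    (f : X → X) (φ : X → Y) (x0 : X)
    (hcar : ∀ x ∈ {y : X | ∃ n : ℕ, y = f^[n] x0}, ψb [x] (φ (f x)) ≤ φ x) :
    (∀ n : ℕ, 1 ≤ n →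
      ψb ((List.range n).map (fun i => f^[i] x0)) (φ (f^[n] x0)) ≤ φ x0) ∧
    (∀ n : ℕ, ψ ((List.range (n + 1)).map (fun i => f^[i] x0)) ≤ φ x0) := by
  have hstep : ∀ i, ψb [f^[i] x0] (φ (f^[i + 1] x0)) ≤ φ (f^[i] x0) := fun i => by
    simpa only [Function.iterate_succ_apply'] using hcar _ ⟨i, rfl⟩
  have htele :=
    ψb_map_range_le_of_step ψb hcompose hmono (fun i => f^[i] x0) (fun i => φ (f^[i] x0)) hstep
  exact ⟨htele, fun n => (hmaj _ _).trans (htele (n + 1) n.succ_pos)⟩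

/-- Caristi-type boundedness of the orbit: under the Caristi condition
`ψ̄(x, φ(f(x))) ≤ φ(x)` on the orbit, one has
`ψ̄(x₀, ..., x_{n-1}, φ(x_n)) ≤ φ(x₀)` for all `n ≥ 1`, and consequently
`ψ(x₀, ..., x_n) ≤ φ(x₀)` for all `n`. Finite tuples are encoded as lists. -/
theorem stmt_13 {X Y : Type*} [PartialOrder Y]
    (ψ : List X → Y) (ψb : List X → Y → Y)
    (hψ : ∀ (x : X) (l : List X), ψ l ≤ ψ (x :: l))
    (hmaj : ∀ (l : List X) (y : Y), ψ l ≤ ψb l y)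
    (hcompose : ∀ (l : List X) (x : X) (y : Y), ψb (l ++ [x]) y ≤ ψb l (ψb [x] y))
    (hmono : ∀ l : List X, Monotone (ψb l))
    (f : X → X) (φ : X → Y) (x0 : X)
    (hcar : ∀ x ∈ {y : X | ∃ n : ℕ, y = f^[n] x0}, ψb [x] (φ (f x)) ≤ φ x) :
    (∀ n : ℕ, 1 ≤ n →
      ψb ((List.range n).map (fun i => f^[i] x0)) (φ (f^[n] x0)) ≤ φ x0) ∧
    (∀ n : ℕ, ψ ((List.range (n + 1)).map (fun i => f^[i] x0)) ≤ φ x0) :=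
  stmt_13_general ψ ψb hmaj hcompose hmono f φ x0 hcar
end

section
/- (Caristi-type fixed set theorem.) Let Y be a partially ordered set, ψ: ⋃_n Xⁿ → Y with ψ(x₂,...,x_n) ≤ ψ(x₁,...,x_n), and let (X, Lim) be a C_ψ-complete Lim-space, where C_ψ is the family of sequences {x_n} for which {ψ(x₁,...,x_n)} is bounded from above in Y. Suppose there is ψ̄: (⋃_n Xⁿ) × Y → Y satisfying ψ(x₁,...,x_n) ≤ ψ̄(x₁,...,x_n, y), ψ̄(x₁,...,x_n, y) ≤ ψ̄(x₁,...,x_{n-1}, ψ̄(x_n, y)), and monotonicity in the last argument. If f: X → X is weakly orbital continuous and there exist φ: X → Y and x₀ ∈ X such that ψ̄(x, φ(f(x))) ≤ φ(x) for all x ∈ O(f, x₀), then f has a nonempty fixed set. -/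
/-!
If the orbit of `x₀` repeats a point, that point is periodic and the set of all periodic points
of `f` is mapped bijectively onto itself. Otherwise the orbit consists of pairwise distinct
points, and chaining the Caristi inequality along it bounds every `ψ̄(x₀, …, xₙ, φ(xₙ₊₁))`, hence
every `ψ(x₀, …, xₙ)`, by `φ(x₀)`; so the orbit lies in `C_ψ` and has a nonempty limit set, which
is fixed by `f` because `Lim` is shift invariant and `f` is weakly orbital continuous.
-/

/-- The Cauchy structure `C_ψ`: sequences whose `ψ`-values of initial segments are
bounded from above. -/
def CpsiStruct {X Y : Type*} [PartialOrder Y] (ψ : List X → Y) (x : ℕ → X) : Prop :=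
  ∃ α : Y, ∀ n : ℕ, ψ ((List.range (n + 1)).map x) ≤ α

open Function

theorem Function.nonempty_periodicPts_of_not_injective_iterate {α : Type*} {f : α → α} {x : α}
    (h : ¬Injective (f^[·] x)) : (periodicPts f).Nonempty := by
  obtain ⟨m, n, heq, hne⟩ : ∃ m n, f^[m] x = f^[n] x ∧ m ≠ n := by
    simpa [Injective] using h
  wlog hlt : m < n generalizing m n
  · exact this n m heq.symm hne.symm (by omega)
  refine ⟨f^[m] x, mk_mem_periodicPts (Nat.sub_pos_of_lt hlt) ?_⟩
  rw [IsPeriodicPt, IsFixedPt, ← iterate_add_apply, Nat.sub_add_cancel hlt.le, heq]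

theorem caristi_bound_of_chain {X Y : Type*} [Preorder Y] (ψb : List X → Y → Y)
    (hcompose : ∀ (l : List X) (x : X) (y : Y), ψb (l ++ [x]) y ≤ ψb l (ψb [x] y))
    (hmono : ∀ l : List X, Monotone (ψb l)) (φ : X → Y) (x : ℕ → X)
    (hcar : ∀ k, ψb [x k] (φ (x (k + 1))) ≤ φ (x k)) (n : ℕ) :
    ψb ((List.range (n + 1)).map x) (φ (x (n + 1))) ≤ φ (x 0) := by
  induction n with
  | zero => exact hcar 0
  | succ n ih =>
    rw [List.range_succ, List.map_append, List.map_singleton]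
    calc ψb ((List.range (n + 1)).map x ++ [x (n + 1)]) (φ (x (n + 2)))
        ≤ ψb ((List.range (n + 1)).map x) (ψb [x (n + 1)] (φ (x (n + 2)))) := hcompose _ _ _
      _ ≤ ψb ((List.range (n + 1)).map x) (φ (x (n + 1))) := hmono _ (hcar (n + 1))
      _ ≤ φ (x 0) := ih

theorem cpsiStruct_of_caristi_chain {X Y : Type*} [PartialOrder Y] (ψ : List X → Y)
    (ψb : List X → Y → Y) (hmaj : ∀ (l : List X) (y : Y), ψ l ≤ ψb l y)
    (hcompose : ∀ (l : List X) (x : X) (y : Y), ψb (l ++ [x]) y ≤ ψb l (ψb [x] y))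
    (hmono : ∀ l : List X, Monotone (ψb l)) (φ : X → Y) (x : ℕ → X)
    (hcar : ∀ k, ψb [x k] (φ (x (k + 1))) ≤ φ (x k)) : CpsiStruct ψ x :=
  ⟨φ (x 0), fun n => (hmaj _ _).trans (caristi_bound_of_chain ψb hcompose hmono φ x hcar n)⟩

theorem stmt_14_general {X Y : Type*} [PartialOrder Y]
    (ψ : List X → Y)
    (Lim : (ℕ → X) → Set X)
    (hLim : ∀ x : ℕ → X, Lim x = Lim (fun n => x (n + 1)))
    (hcomplete : ∀ x : ℕ → X, CpsiStruct ψ x → Function.Injective x → (Lim x).Nonempty)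
    (ψb : List X → Y → Y)
    (hmaj : ∀ (l : List X) (y : Y), ψ l ≤ ψb l y)
    (hcompose : ∀ (l : List X) (x : X) (y : Y), ψb (l ++ [x]) y ≤ ψb l (ψb [x] y))
    (hmono : ∀ l : List X, Monotone (ψb l))
    (f : X → X)
    (hcont : ∀ x0 : X, (Lim (fun n => f^[n] x0)).Nonempty →
      Lim (fun n => f (f^[n] x0)) = f '' Lim (fun n => f^[n] x0))
    (φ : X → Y) (x0 : X)
    (hcar : ∀ x ∈ {y : X | ∃ n : ℕ, y = f^[n] x0}, ψb [x] (φ (f x)) ≤ φ x) :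
    ∃ A : Set X, A.Nonempty ∧ f '' A = A := by
  by_cases hinj : Injective (f^[·] x0)
  · have hchain : ∀ k, ψb [f^[k] x0] (φ (f^[k + 1] x0)) ≤ φ (f^[k] x0) := fun k => by
      simpa only [iterate_succ_apply'] using hcar _ ⟨k, rfl⟩
    have hne := hcomplete _ (cpsiStruct_of_caristi_chain ψ ψb hmaj hcompose hmono φ _ hchain) hinj
    refine ⟨_, hne, ?_⟩
    rw [← hcont x0 hne, hLim (f^[·] x0)]
    simp only [iterate_succ_apply']
  · exact ⟨periodicPts f, nonempty_periodicPts_of_not_injective_iterate hinj,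
      (bijOn_periodicPts f).image_eq⟩

/-- Caristi-type fixed set theorem: in a C_ψ-complete Lim-space, a weakly
orbital continuous map satisfying the Caristi condition on some orbit has a nonempty
fixed set. -/
theorem stmt_14 {X Y : Type*} [PartialOrder Y]
    (ψ : List X → Y)
    (hψ : ∀ (x : X) (l : List X), ψ l ≤ ψ (x :: l))
    (Lim : (ℕ → X) → Set X)
    (hLim : ∀ x : ℕ → X, Lim x = Lim (fun n => x (n + 1)))
    (hcomplete : ∀ x : ℕ → X, CpsiStruct ψ x → Function.Injective x → (Lim x).Nonempty)
    (ψb : List X → Y → Y)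
    (hmaj : ∀ (l : List X) (y : Y), ψ l ≤ ψb l y)
    (hcompose : ∀ (l : List X) (x : X) (y : Y), ψb (l ++ [x]) y ≤ ψb l (ψb [x] y))
    (hmono : ∀ l : List X, Monotone (ψb l))
    (f : X → X)
    (hcont : ∀ x0 : X, (Lim (fun n => f^[n] x0)).Nonempty →
      Lim (fun n => f (f^[n] x0)) = f '' Lim (fun n => f^[n] x0))
    (φ : X → Y) (x0 : X)
    (hcar : ∀ x ∈ {y : X | ∃ n : ℕ, y = f^[n] x0}, ψb [x] (φ (f x)) ≤ φ x) :
    ∃ A : Set X, A.Nonempty ∧ f '' A = A :=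
  stmt_14_general ψ Lim hLim hcomplete ψb hmaj hcompose hmono f hcont φ x0 hcar
end
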